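/- arXiv:2407.02771 — 2 statements merged into one kernel-verified Lean document; each statement's English description precedes it below -/
import Mathlib

section
/- The map from ℝ⁵ to ℝ⁵ sending (k02, k21, k12, k01, V) to (V, k12*k21, k02 + k12, k01 + k21, (k01 + k21) + (k02 + k12)) is not injective on the open set where all coordinates are positive. -/
theorem pharmacokinetics_coeff_map_not_injective :
    ¬ Set.InjOn
      (fun p : ℝ × ℝ × ℝ × ℝ × ℝ =>
        -- p = (k02, k21, k12, k01, V)
        (p.2.2.2.2, p.2.2.1 * p.2.1, p.1 + p.2.2.1, p.2.2.2.1 + p.2.1,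
          (p.2.2.2.1 + p.2.1) + (p.1 + p.2.2.1)))
      {p : ℝ × ℝ × ℝ × ℝ × ℝ |
        0 < p.1 ∧ 0 < p.2.1 ∧ 0 < p.2.2.1 ∧ 0 < p.2.2.2.1 ∧ 0 < p.2.2.2.2} := by
  intro h
  have := h (show ((1:ℝ),(1:ℝ),(2:ℝ),(2:ℝ),(1:ℝ)) ∈ _ from by norm_num) (show ((2:ℝ),(2:ℝ),(1:ℝ),(1:ℝ),(1:ℝ)) ∈ _ from by norm_num)
    (by norm_num)
  simp at this
end

section
/- The map from the positive orthant of ℝ⁴ (parameters k01, k21, k12, k02 > 0) to ℝ³ given by (k12*k21, k02 + k12, k01 + k21) has fibers of dimension at least 1: for every parameter point p and every sufficiently small ε > 0 there exists a distinct parameter point p' with the same image and |p − p'| < ε. -/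
theorem pharmacokinetics_fibers_dim_ge_one
    (S : Set (ℝ × ℝ × ℝ × ℝ))
    (hS : S = {p : ℝ × ℝ × ℝ × ℝ | 0 < p.1 ∧ 0 < p.2.1 ∧ 0 < p.2.2.1 ∧ 0 < p.2.2.2}) :
    ∀ p ∈ S, ∃ ε0 > (0 : ℝ), ∀ ε, 0 < ε → ε < ε0 →
      ∃ p' ∈ S, p' ≠ p ∧
        -- p = (k01, k21, k12, k02); image (k12*k21, k02+k12, k01+k21)
        (p'.2.2.1 * p'.2.1, p'.2.2.2 + p'.2.2.1, p'.1 + p'.2.1) =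
          (p.2.2.1 * p.2.1, p.2.2.2 + p.2.2.1, p.1 + p.2.1) ∧
        dist p p' < ε := by
  subst hS
  rintro ⟨a, b, c, d⟩ ⟨ha, hb, hc, hd⟩
  refine ⟨a, ha, fun ε hε hεa => ?_⟩
  set δ : ℝ := ε * b / (2 * (b + c)) with hδdef
  have hbc : 0 < b + c := by linarith
  have hδpos : 0 < δ := by positivity
  have hδhalf : δ < ε / 2 := by
    rw [hδdef, div_lt_div_iff₀ (by positivity) (by norm_num)]
    nlinarith
  have hδa : δ < a := by linarith
  have hbδ : 0 < b + δ := by linarith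
  refine ⟨(a - δ, b + δ, c * b / (b + δ), d + c - c * b / (b + δ)), ⟨by linarith, hbδ,
    by positivity, ?_⟩, ?_, ?_, ?_⟩
  · have : d + c - c * b / (b + δ) = d + c * δ / (b + δ) := by field_simp; ring
    rw [this]; positivity
  · simp only [ne_eq, Prod.mk.injEq]
    intro h
    exact absurd h.2.1 (by intro h2; linarith)
  · simp only [Prod.mk.injEq]
    refine ⟨by field_simp, by ring, by ring⟩
  · have hcd : c * b / (b + δ) ≤ c := by
      rw [div_le_iff₀ hbδ]; nlinarith
    have hδeq : δ * (2 * (b + c)) = ε * b := by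
      rw [hδdef]; field_simp
    have hcd2 : c - c * b / (b + δ) < ε := by
      have h1 : c - c * b / (b + δ) = c * δ / (b + δ) := by field_simp; ring
      rw [h1, div_lt_iff₀ hbδ]
      nlinarith [mul_pos hε hb, mul_pos hε hδpos, mul_pos hc hδpos]
    simp only [Prod.dist_eq, Real.dist_eq, sup_lt_iff]
    refine ⟨by rw [abs_of_pos (by linarith : (0:ℝ) < a - (a - δ))]; linarith,
      by rw [abs_of_neg (by linarith : b - (b + δ) < 0)]; simp; linarith,
      by rw [abs_of_nonneg (by linarith : (0:ℝ) ≤ c - c * b / (b + δ))]; linarith,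
      by rw [abs_of_nonpos (by linarith : d - (d + c - c * b / (b + δ)) ≤ 0)]; simp; linarith⟩
end
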